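/- arXiv:2002.10512 — 3 statements merged into one kernel-verified Lean document; each statement's English description precedes it below -/
import Mathlib

section
/- Assume the Problem-B setup. Suppose there exist maps L_n : F → F_n (n ∈ ℕ) such that: (a) for every f ∈ B there exists a sequence f_n ∈ B_n with lim_{n→∞} ‖f_n − L_n(f)‖*_n = 0; (b) for every h ∈ F with ‖φ − h‖* > 0, limsup_{n→∞} ‖φ_n − L_n(h)‖*_n ≤ ‖φ − h‖*. Then limsup_{n→∞} E(φ_n, B_n) ≤ E(φ, B). -/
open Filter Topology NNReal ENNReal

/-! For `f ∈ B`, condition (a) gives `f_n ∈ B_n` close to `L_n f`, so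
`E(φ_n, B_n) ≤ ‖φ_n - f_n‖`, and the β-triangle inequality bounds `‖φ_n - f_n‖^β` by
`‖φ_n - L_n f‖^β` plus a null sequence. Passing to the limsup and using (b) gives
`limsup E(φ_n, B_n) ≤ ‖φ - f‖`; now take the infimum over `f ∈ B`. -/

lemma map_neg_of_map_smul {𝕜 E : Type*} [NormedRing 𝕜] [NormOneClass 𝕜] [AddCommGroup E]
    [Module 𝕜 E] {N : E → ℝ≥0} (hN : ∀ (α : 𝕜) (x : E), N (α • x) = ‖α‖₊ * N x) (x : E) :
    N (-x) = N x := by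
  simpa using hN (-1) x

lemma rpow_map_sub_le_add {E : Type*} [AddCommGroup E] {N : E → ℝ≥0} {β : ℝ}
    (hneg : ∀ x, N (-x) = N x) (htri : ∀ x y, N (x + y) ^ β ≤ N x ^ β + N y ^ β) (x y z : E) :
    N (x - z) ^ β ≤ N (x - y) ^ β + N (z - y) ^ β := by
  have hsplit : x - z = (x - y) + -(z - y) := by abel
  simpa only [hsplit, hneg] using htri (x - y) (-(z - y))

namespace ENNReal

lemma limsup_rpow {ι : Type*} {l : Filter ι} {β : ℝ} (hβ : 0 < β) (u : ι → ℝ≥0∞) :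
    limsup u l ^ β = limsup (fun i => u i ^ β) l :=
  (orderIsoRpow β hβ).limsup_apply

lemma limsup_le_of_rpow_le_add_rpow {ι : Type*} {l : Filter ι} {β : ℝ} (hβ : 0 < β)
    {a b c : ι → ℝ≥0∞} (hc : ∀ᶠ i in l, c i ^ β ≤ a i ^ β + b i ^ β)
    (hb : Tendsto b l (𝓝 0)) : limsup c l ≤ limsup a l := by
  have hbβ : Tendsto (fun i => b i ^ β) l (𝓝 0) := by
    simpa [zero_rpow_of_pos hβ, Function.comp_def] using
      ((continuous_rpow_const (y := β)).tendsto 0).comp hb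
  rw [← rpow_le_rpow_iff hβ, limsup_rpow hβ, limsup_rpow hβ,
    ← limsup_add_of_right_tendsto_zero hbβ (fun i => a i ^ β)]
  exact limsup_le_limsup hc

end ENNReal

theorem limsup_best_approx_le_general
    (β : ℝ) (hβ0 : 0 < β)
    -- the β-normed space F
    (F : Type*) [AddCommGroup F] (Ns : F → ℝ≥0)
    -- the β-normed spaces F_n
    (Fn : ℕ → Type*) [∀ n, AddCommGroup (Fn n)] [∀ n, Module ℂ (Fn n)]
    (Nsn : ∀ n, Fn n → ℝ≥0)
    (hNhn : ∀ n (α : ℂ) (f : Fn n), Nsn n (α • f) = ‖α‖₊ * Nsn n f)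
    (hNtn : ∀ n (f g : Fn n), Nsn n (f + g) ^ β ≤ Nsn n f ^ β + Nsn n g ^ β)
    -- the nonempty proper subsets B and B_n
    (B : Set F)
    (Bn : ∀ n, Set (Fn n))
    -- the fixed elements φ and φ_n
    (φ : F) (φn : ∀ n, Fn n)
    -- positivity of the errors of best approximation
    (hE : 0 < ⨅ f ∈ B, (Ns (φ - f) : ℝ≥0∞))
    -- the operators L_n
    (L : ∀ n, F → Fn n)
    -- (a)
    (ha : ∀ f ∈ B, ∃ fn : ∀ n, Fn n, (∀ n, fn n ∈ Bn n) ∧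
        Filter.Tendsto (fun n => Nsn n (fn n - L n f)) Filter.atTop (nhds 0))
    -- (b)
    (hb : ∀ h : F, 0 < Ns (φ - h) →
        Filter.limsup (fun n => (Nsn n (φn n - L n h) : ℝ≥0∞)) Filter.atTop
          ≤ (Ns (φ - h) : ℝ≥0∞)) :
    Filter.limsup (fun n => ⨅ f ∈ Bn n, (Nsn n (φn n - f) : ℝ≥0∞)) Filter.atTop
      ≤ ⨅ f ∈ B, (Ns (φ - f) : ℝ≥0∞) := by
  refine le_iInf₂ fun f hf => ?_
  obtain ⟨fn, hfn, htend⟩ := ha f hf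
  have hpos : 0 < Ns (φ - f) := ENNReal.coe_pos.mp (hE.trans_le (iInf₂_le f hf))
  have hsplit (n : ℕ) : (Nsn n (φn n - fn n) : ℝ≥0∞) ^ β
      ≤ (Nsn n (φn n - L n f) : ℝ≥0∞) ^ β + (Nsn n (fn n - L n f) : ℝ≥0∞) ^ β := by
    simpa only [← ENNReal.coe_rpow_of_nonneg _ hβ0.le, ← ENNReal.coe_add, ENNReal.coe_le_coe]
      using rpow_map_sub_le_add (map_neg_of_map_smul (hNhn n)) (hNtn n) (φn n) (L n f) (fn n)
  calc limsup (fun n => ⨅ g ∈ Bn n, (Nsn n (φn n - g) : ℝ≥0∞)) atTop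
      ≤ limsup (fun n => (Nsn n (φn n - fn n) : ℝ≥0∞)) atTop :=
        limsup_le_limsup (.of_forall fun n => iInf₂_le (fn n) (hfn n))
    _ ≤ limsup (fun n => (Nsn n (φn n - L n f) : ℝ≥0∞)) atTop :=
        ENNReal.limsup_le_of_rpow_le_add_rpow hβ0 (.of_forall hsplit)
          (ENNReal.tendsto_coe.mpr htend)
    _ ≤ Ns (φ - f) := hb f hpos

/-- Corollary 2.14 (i), Problem B: under conditions (a) and (b) on the
operators `L_n`, the errors of best approximation satisfy
`limsup E(φ_n, B_n) ≤ E(φ, B)`. -/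
theorem limsup_best_approx_le
    (β : ℝ) (hβ0 : 0 < β) (hβ1 : β ≤ 1)
    -- the β-normed space F
    (F : Type*) [AddCommGroup F] [Module ℂ F] (Ns : F → ℝ≥0)
    (hN0 : ∀ f : F, Ns f = 0 ↔ f = 0)
    (hNh : ∀ (α : ℂ) (f : F), Ns (α • f) = ‖α‖₊ * Ns f)
    (hNt : ∀ f g : F, Ns (f + g) ^ β ≤ Ns f ^ β + Ns g ^ β)
    -- the β-normed spaces F_n
    (Fn : ℕ → Type*) [∀ n, AddCommGroup (Fn n)] [∀ n, Module ℂ (Fn n)]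
    (Nsn : ∀ n, Fn n → ℝ≥0)
    (hN0n : ∀ n (f : Fn n), Nsn n f = 0 ↔ f = 0)
    (hNhn : ∀ n (α : ℂ) (f : Fn n), Nsn n (α • f) = ‖α‖₊ * Nsn n f)
    (hNtn : ∀ n (f g : Fn n), Nsn n (f + g) ^ β ≤ Nsn n f ^ β + Nsn n g ^ β)
    -- the nonempty proper subsets B and B_n
    (B : Set F) (hBne : B.Nonempty) (hBpr : B ≠ Set.univ)
    (Bn : ∀ n, Set (Fn n)) (hBnne : ∀ n, (Bn n).Nonempty) (hBnpr : ∀ n, Bn n ≠ Set.univ)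
    -- the fixed elements φ and φ_n
    (φ : F) (hφ : φ ∉ B) (φn : ∀ n, Fn n) (hφn : ∀ n, φn n ∉ Bn n)
    -- positivity of the errors of best approximation
    (hE : 0 < ⨅ f ∈ B, (Ns (φ - f) : ℝ≥0∞))
    (hEn : ∀ n, 0 < ⨅ f ∈ Bn n, (Nsn n (φn n - f) : ℝ≥0∞))
    -- the operators L_n
    (L : ∀ n, F → Fn n)
    -- (a)
    (ha : ∀ f ∈ B, ∃ fn : ∀ n, Fn n, (∀ n, fn n ∈ Bn n) ∧
        Filter.Tendsto (fun n => Nsn n (fn n - L n f)) Filter.atTop (nhds 0))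
    -- (b)
    (hb : ∀ h : F, 0 < Ns (φ - h) →
        Filter.limsup (fun n => (Nsn n (φn n - L n h) : ℝ≥0∞)) Filter.atTop
          ≤ (Ns (φ - h) : ℝ≥0∞)) :
    Filter.limsup (fun n => ⨅ f ∈ Bn n, (Nsn n (φn n - f) : ℝ≥0∞)) Filter.atTop
      ≤ ⨅ f ∈ B, (Ns (φ - f) : ℝ≥0∞) :=
  limsup_best_approx_le_general β hβ0 F Ns Fn Nsn hNhn hNtn B Bn φ φn hE L ha hb
end

section
/- Assume the Problem-B setup. Suppose for each n there is a set B′_n ⊆ B_n \ {0} with inf_{f ∈ B′_n} ‖φ_n − f‖*_n = E(φ_n, B_n), and that there exist maps l_n : F → F_n (n ∈ ℕ) such that: (a) for every h ∈ F, liminf_{n→∞} ‖φ_n − l_n(h)‖*_n ≥ ‖φ − h‖*; (b) (compactness) for every strictly increasing sequence (m_p) in ℕ and every choice f_p ∈ B′_{m_p}, there exist a strictly increasing subsequence (m_{p_k}) and an element f ∈ B with lim_{k→∞} ‖f_{p_k} − l_{m_{p_k}}(f)‖*_{m_{p_k}} = 0. Then liminf_{n→∞} E(φ_n, B_n) ≥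 E(φ, B). -/
open Filter Topology NNReal ENNReal

/-- Corollary 2.14 (ii), Problem B: under condition (a) on the operators
`l_n` and the compactness condition (b), the errors of best approximation satisfy
`liminf E(φ_n, B_n) ≥ E(φ, B)`. -/
theorem liminf_best_approx_ge
    (β : ℝ) (hβ0 : 0 < β) (hβ1 : β ≤ 1)
    -- the β-normed space F
    (F : Type*) [AddCommGroup F] [Module ℂ F] (Ns : F → ℝ≥0)
    (hN0 : ∀ f : F, Ns f = 0 ↔ f = 0)
    (hNh : ∀ (α : ℂ) (f : F), Ns (α • f) = ‖α‖₊ * Ns f)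
    (hNt : ∀ f g : F, Ns (f + g) ^ β ≤ Ns f ^ β + Ns g ^ β)
    -- the β-normed spaces F_n
    (Fn : ℕ → Type*) [∀ n, AddCommGroup (Fn n)] [∀ n, Module ℂ (Fn n)]
    (Nsn : ∀ n, Fn n → ℝ≥0)
    (hN0n : ∀ n (f : Fn n), Nsn n f = 0 ↔ f = 0)
    (hNhn : ∀ n (α : ℂ) (f : Fn n), Nsn n (α • f) = ‖α‖₊ * Nsn n f)
    (hNtn : ∀ n (f g : Fn n), Nsn n (f + g) ^ β ≤ Nsn n f ^ β + Nsn n g ^ β)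
    -- the nonempty proper subsets B and B_n
    (B : Set F) (hBne : B.Nonempty) (hBpr : B ≠ Set.univ)
    (Bn : ∀ n, Set (Fn n)) (hBnne : ∀ n, (Bn n).Nonempty) (hBnpr : ∀ n, Bn n ≠ Set.univ)
    -- the fixed elements φ and φ_n
    (φ : F) (hφ : φ ∉ B) (φn : ∀ n, Fn n) (hφn : ∀ n, φn n ∉ Bn n)
    -- positivity of the errors of best approximation
    (hE : 0 < ⨅ f ∈ B, (Ns (φ - f) : ℝ≥0∞))
    (hEn : ∀ n, 0 < ⨅ f ∈ Bn n, (Nsn n (φn n - f) : ℝ≥0∞))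
    -- the sets B′_n
    (B' : ∀ n, Set (Fn n))
    (hB'sub : ∀ n, B' n ⊆ Bn n \ {0})
    (hB'eq : ∀ n, (⨅ f ∈ B' n, (Nsn n (φn n - f) : ℝ≥0∞))
        = ⨅ f ∈ Bn n, (Nsn n (φn n - f) : ℝ≥0∞))
    -- the operators l_n
    (l : ∀ n, F → Fn n)
    -- (a)
    (ha : ∀ h : F, (Ns (φ - h) : ℝ≥0∞)
        ≤ Filter.liminf (fun n => (Nsn n (φn n - l n h) : ℝ≥0∞)) Filter.atTop)
    -- (b) compactness
    (hb : ∀ m : ℕ → ℕ, StrictMono m → ∀ fp : ∀ p, Fn (m p), (∀ p, fp p ∈ B' (m p)) →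
        ∃ k : ℕ → ℕ, StrictMono k ∧ ∃ f ∈ B,
          Filter.Tendsto (fun j => Nsn (m (k j)) (fp (k j) - l (m (k j)) f))
            Filter.atTop (nhds 0)) :
    (⨅ f ∈ B, (Ns (φ - f) : ℝ≥0∞))
      ≤ Filter.liminf (fun n => ⨅ f ∈ Bn n, (Nsn n (φn n - f) : ℝ≥0∞)) Filter.atTop := by
  set Epn : ℕ → ℝ≥0∞ := fun n => ⨅ f ∈ Bn n, (Nsn n (φn n - f) : ℝ≥0∞) with hEpn
  set L := Filter.liminf Epn Filter.atTop with hL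
  rcases eq_or_ne L ⊤ with hLtop | hLtop
  · rw [hLtop]; exact le_top
  refine ENNReal.le_of_forall_pos_le_add fun ε hε hLlt => ?_
  have hLe : L < L + (ε : ℝ≥0∞) :=
    ENNReal.lt_add_right hLtop (by exact_mod_cast hε.ne')
  have hfreq : ∃ᶠ n in Filter.atTop, Epn n < L + ε :=
    Filter.frequently_lt_of_liminf_lt (by isBoundedDefault) hLe
  obtain ⟨m, hm, hmE⟩ := Filter.extraction_of_frequently_atTop hfreq
  have hfp : ∀ p, ∃ g, ∃ _ : g ∈ B' (m p),
      (Nsn (m p) (φn (m p) - g) : ℝ≥0∞) < L + ε := by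
    intro p
    have h1 : (⨅ f ∈ B' (m p), (Nsn (m p) (φn (m p) - f) : ℝ≥0∞)) < L + ε := by
      rw [hB'eq]; exact hmE p
    simpa [iInf_lt_iff] using h1
  choose fp hfpB hfplt using hfp
  obtain ⟨k, hk, f, hfB, htend⟩ := hb m hm fp hfpB
  set s : ℕ → ℕ := fun j => m (k j) with hs
  have hsm : StrictMono s := hm.comp hk
  set v : ℕ → ℝ≥0∞ := fun n => (Nsn n (φn n - l n f) : ℝ≥0∞) with hv
  -- the subsequence liminf dominates the liminf
  have hsub : Filter.liminf v Filter.atTop ≤ Filter.liminf (v ∘ s) Filter.atTop := by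
    rw [Filter.liminf_comp v s]
    exact Filter.liminf_le_liminf_of_le hsm.tendsto_atTop
  -- the key bound on the subsequence liminf
  have hkey : Filter.liminf (v ∘ s) Filter.atTop ≤ L + ε := by
    have hLεtop : (L + ε : ℝ≥0∞) ≠ ⊤ := by
      simp [hLtop]
    have hβne : β ≠ 0 := hβ0.ne'
    -- raise to the power β
    have hpow : (Filter.liminf (v ∘ s) Filter.atTop) ^ β ≤ ((L + ε) ^ β : ℝ≥0∞) := by
      refine ENNReal.le_of_forall_pos_le_add fun η hη hfin => ?_
      -- eventually the correction term is small
      have hcsmall : ∀ᶠ j in Filter.atTop,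
          ((Nsn (s j) (fp (k j) - l (s j) f) : ℝ≥0∞)) ^ β ≤ (η : ℝ≥0∞) := by
        have hηpos : (0 : ℝ≥0∞) < (η : ℝ≥0∞) ^ (1 / β) :=
          ENNReal.rpow_pos (by exact_mod_cast hη) (by simp)
        have htend' : Filter.Tendsto
            (fun j => ((Nsn (s j) (fp (k j) - l (s j) f) : ℝ≥0∞)))
            Filter.atTop (nhds 0) := by
          rw [← ENNReal.coe_zero]
          exact ENNReal.tendsto_coe.2 htend
        filter_upwards [htend'.eventually_lt_const hηpos] with j hj
        calc ((Nsn (s j) (fp (k j) - l (s j) f) : ℝ≥0∞)) ^ β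
            ≤ ((η : ℝ≥0∞) ^ (1 / β)) ^ β := ENNReal.rpow_le_rpow hj.le hβ0.le
          _ = (η : ℝ≥0∞) := by
              rw [← ENNReal.rpow_mul, one_div, inv_mul_cancel₀ hβne, ENNReal.rpow_one]
      -- the pointwise bound a_j ≤ ((L+ε)^β + η)^(1/β) eventually
      have hbound : ∀ᶠ j in Filter.atTop,
          (v ∘ s) j ≤ (((L + ε) ^ β + η : ℝ≥0∞)) ^ (1 / β) := by
        filter_upwards [hcsmall] with j hj
        have htri : (v (s j)) ^ β
            ≤ ((Nsn (s j) (φn (s j) - fp (k j)) : ℝ≥0∞)) ^ β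
              + ((Nsn (s j) (fp (k j) - l (s j) f) : ℝ≥0∞)) ^ β := by
          have h2 := hNtn (s j) (φn (s j) - fp (k j)) (fp (k j) - l (s j) f)
          rw [sub_add_sub_cancel] at h2
          rw [hv]
          simp only [← ENNReal.coe_rpow_of_nonneg _ hβ0.le, ← ENNReal.coe_add,
            ENNReal.coe_le_coe]
          exact h2
        have hstep : (v (s j)) ^ β ≤ (L + ε) ^ β + η := by
          refine htri.trans (add_le_add ?_ hj)
          exact ENNReal.rpow_le_rpow (hfplt (k j)).le hβ0.le
        calc (v ∘ s) j = ((v (s j)) ^ β) ^ (1 / β) := by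
              rw [Function.comp_apply, ← ENNReal.rpow_mul, mul_one_div, div_self hβne, ENNReal.rpow_one]
          _ ≤ (((L + ε) ^ β + η : ℝ≥0∞)) ^ (1 / β) :=
              ENNReal.rpow_le_rpow hstep (by positivity)
      have hlim : Filter.liminf (v ∘ s) Filter.atTop
          ≤ (((L + ε) ^ β + η : ℝ≥0∞)) ^ (1 / β) :=
        Filter.liminf_le_of_frequently_le' hbound.frequently
      calc (Filter.liminf (v ∘ s) Filter.atTop) ^ β
          ≤ ((((L + ε) ^ β + η : ℝ≥0∞)) ^ (1 / β)) ^ β :=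
            ENNReal.rpow_le_rpow hlim hβ0.le
        _ = (L + ε) ^ β + η := by
            rw [← ENNReal.rpow_mul, one_div, inv_mul_cancel₀ hβne, ENNReal.rpow_one]
    -- strip the power β
    calc Filter.liminf (v ∘ s) Filter.atTop
        = ((Filter.liminf (v ∘ s) Filter.atTop) ^ β) ^ (1 / β) := by
          rw [← ENNReal.rpow_mul, mul_one_div, div_self hβne, ENNReal.rpow_one]
      _ ≤ (((L + ε) ^ β : ℝ≥0∞)) ^ (1 / β) := ENNReal.rpow_le_rpow hpow (by positivity)
      _ = L + ε := by
          rw [← ENNReal.rpow_mul, mul_one_div, div_self hβne, ENNReal.rpow_one]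
  calc (⨅ g ∈ B, (Ns (φ - g) : ℝ≥0∞)) ≤ (Ns (φ - f) : ℝ≥0∞) := biInf_le _ hfB
    _ ≤ Filter.liminf v Filter.atTop := ha f
    _ ≤ Filter.liminf (v ∘ s) Filter.atTop := hsub
    _ ≤ L + ε := hkey
end

section
/- Assume the Problem-C setup. Suppose there exist maps L_n : F → F_n (n ∈ ℕ) such that: (a) for every f ∈ B \ {0} there exists a sequence f_n ∈ B_n with lim_{n→∞} ‖L_n(f) − f_n‖*_n = 0; (b) for every h ∈ B, liminf_{n→∞} E_n(L_n(h), G_n) ≥ E(h, G). Then sup_{f ∈ B \ {0}} E(f, G) ≤ liminf_{n→∞} sup_{f ∈ B_n} E_n(f, G_n). -/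
open Filter Topology NNReal ENNReal

/-!
For `f ∈ B \ {0}` pick `f_n ∈ B_n` with `‖L_n f - f_n‖ → 0` by (a). The `β`-triangle inequality
passes to errors of best approximation in the form
`E_n(L_n f)^β ≤ ‖L_n f - f_n‖^β + E_n(f_n)^β ≤ ‖L_n f - f_n‖^β + S_n^β`,
with `S_n := sup_{B_n} E_n`. The first summand tends to `0`, so taking `liminf` gives
`liminf E_n(L_n f) ≤ liminf S_n`, and (b) bounds `E(f)` by the left-hand side.
-/

noncomputable def bestApproxError {E : Type*} [Sub E] (N : E → ℝ≥0) (S : Set E) (x : E) :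
    ℝ≥0∞ :=
  ⨅ g ∈ S, (N (x - g) : ℝ≥0∞)

theorem bestApproxError_rpow_le_add {E : Type*} [AddGroup E] {N : E → ℝ≥0} {β : ℝ}
    (hβ : 0 < β) (hN : ∀ a b, N (a + b) ^ β ≤ N a ^ β + N b ^ β) (S : Set E) (x y : E) :
    bestApproxError N S x ^ β ≤ (N (x - y) : ℝ≥0∞) ^ β + bestApproxError N S y ^ β := by
  have hmap : bestApproxError N S y ^ β = ⨅ g ∈ S, (N (y - g) : ℝ≥0∞) ^ β := by
    change orderIsoRpow β hβ (⨅ g ∈ S, (N (y - g) : ℝ≥0∞)) = _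
    simp only [OrderIso.map_iInf, ENNReal.orderIsoRpow_apply]
  simp only [hmap, ENNReal.add_iInf]
  refine le_iInf₂ fun g hg => ?_
  calc bestApproxError N S x ^ β ≤ (N (x - g) : ℝ≥0∞) ^ β := by
        gcongr; exact biInf_le _ hg
    _ ≤ (N (x - y) : ℝ≥0∞) ^ β + (N (y - g) : ℝ≥0∞) ^ β := by
        simpa only [← ENNReal.coe_rpow_of_nonneg _ hβ.le, ← ENNReal.coe_add, ENNReal.coe_le_coe,
          sub_add_sub_cancel] using hN (x - y) (y - g)

namespace ENNReal

theorem liminf_rpow {ι : Type*} {l : Filter ι} (u : ι → ℝ≥0∞) {β : ℝ} (hβ : 0 < β) :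
    liminf (fun i => u i ^ β) l = liminf u l ^ β :=
  (orderIsoRpow β hβ).liminf_apply.symm

theorem liminf_le_liminf_of_rpow_le_add {ι : Type*} {l : Filter ι} {u v ε : ι → ℝ≥0∞} {β : ℝ}
    (hβ : 0 < β) (hε : Tendsto ε l (𝓝 0)) (h : ∀ᶠ i in l, u i ^ β ≤ ε i + v i ^ β) :
    liminf u l ≤ liminf v l := by
  rw [← rpow_le_rpow_iff hβ, ← liminf_rpow u hβ, ← liminf_rpow v hβ]
  calc liminf (fun i => u i ^ β) l ≤ liminf (ε + fun i => v i ^ β) l := liminf_le_liminf h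
    _ = liminf (fun i => v i ^ β) l := liminf_add_of_left_tendsto_zero hε _

end ENNReal

theorem sup_best_approx_le_liminf_general
    (β : ℝ) (hβ0 : 0 < β)
    -- the β-normed space F with subspace G
    (F : Type*) [AddCommGroup F] [Module ℂ F] (Ns : F → ℝ≥0)
    (G : Submodule ℂ F)
    -- the β-normed spaces F_n with subspaces G_n
    (Fn : ℕ → Type*) [∀ n, AddCommGroup (Fn n)] [∀ n, Module ℂ (Fn n)]
    (Nsn : ∀ n, Fn n → ℝ≥0)
    (hNtn : ∀ n (f g : Fn n), Nsn n (f + g) ^ β ≤ Nsn n f ^ β + Nsn n g ^ β)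
    (Gn : ∀ n, Submodule ℂ (Fn n))
    -- the nonempty subsets B and B_n
    (B : Set F)
    (Bn : ∀ n, Set (Fn n))
    -- the operators L_n
    (L : ∀ n, F → Fn n)
    -- (a)
    (ha : ∀ f ∈ B, f ≠ 0 → ∃ fn : ∀ n, Fn n, (∀ n, fn n ∈ Bn n) ∧
        Filter.Tendsto (fun n => Nsn n (L n f - fn n)) Filter.atTop (nhds 0))
    -- (b)
    (hb : ∀ h ∈ B, (⨅ g ∈ (G : Set F), (Ns (h - g) : ℝ≥0∞))
        ≤ Filter.liminf
            (fun n => ⨅ g ∈ (Gn n : Set (Fn n)), (Nsn n (L n h - g) : ℝ≥0∞))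
            Filter.atTop) :
    (⨆ f ∈ B \ {0}, ⨅ g ∈ (G : Set F), (Ns (f - g) : ℝ≥0∞))
      ≤ Filter.liminf
          (fun n => ⨆ f ∈ Bn n, ⨅ g ∈ (Gn n : Set (Fn n)), (Nsn n (f - g) : ℝ≥0∞))
          Filter.atTop := by
  refine iSup₂_le fun f hf => (hb f hf.1).trans ?_
  obtain ⟨fn, hfnB, hfn⟩ := ha f hf.1 hf.2
  have hε : Tendsto (fun n => (Nsn n (L n f - fn n) : ℝ≥0∞) ^ β) atTop (𝓝 0) := by
    simpa only [Function.comp_def, ENNReal.zero_rpow_of_pos hβ0] using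
      ((ENNReal.continuous_rpow_const (y := β)).tendsto 0).comp (ENNReal.tendsto_coe.2 hfn)
  refine ENNReal.liminf_le_liminf_of_rpow_le_add hβ0 hε (.of_forall fun n => ?_)
  calc bestApproxError (Nsn n) (Gn n) (L n f) ^ β
      ≤ (Nsn n (L n f - fn n) : ℝ≥0∞) ^ β + bestApproxError (Nsn n) (Gn n) (fn n) ^ β :=
        bestApproxError_rpow_le_add hβ0 (hNtn n) _ _ _
    _ ≤ (Nsn n (L n f - fn n) : ℝ≥0∞) ^ β
          + (⨆ h ∈ Bn n, bestApproxError (Nsn n) (Gn n) h) ^ β := by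
        gcongr
        exact le_iSup₂ (f := fun h (_ : h ∈ Bn n) => bestApproxError (Nsn n) (Gn n) h) _ (hfnB n)

/-- Corollary 2.19 (i), Problem C: under conditions (a) and (b) on the
operators `L_n`, one has
`sup_{f ∈ B \ {0}} E(f, G) ≤ liminf_n sup_{f ∈ B_n} E_n(f, G_n)`. -/
theorem sup_best_approx_le_liminf
    (β : ℝ) (hβ0 : 0 < β) (hβ1 : β ≤ 1)
    -- the β-normed space F with subspace G
    (F : Type*) [AddCommGroup F] [Module ℂ F] (Ns : F → ℝ≥0)
    (hN0 : ∀ f : F, Ns f = 0 ↔ f = 0)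
    (hNh : ∀ (α : ℂ) (f : F), Ns (α • f) = ‖α‖₊ * Ns f)
    (hNt : ∀ f g : F, Ns (f + g) ^ β ≤ Ns f ^ β + Ns g ^ β)
    (G : Submodule ℂ F)
    -- the β-normed spaces F_n with subspaces G_n
    (Fn : ℕ → Type*) [∀ n, AddCommGroup (Fn n)] [∀ n, Module ℂ (Fn n)]
    (Nsn : ∀ n, Fn n → ℝ≥0)
    (hN0n : ∀ n (f : Fn n), Nsn n f = 0 ↔ f = 0)
    (hNhn : ∀ n (α : ℂ) (f : Fn n), Nsn n (α • f) = ‖α‖₊ * Nsn n f)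
    (hNtn : ∀ n (f g : Fn n), Nsn n (f + g) ^ β ≤ Nsn n f ^ β + Nsn n g ^ β)
    (Gn : ∀ n, Submodule ℂ (Fn n))
    -- the nonempty subsets B and B_n
    (B : Set F) (hBne : B.Nonempty)
    (Bn : ∀ n, Set (Fn n)) (hBnne : ∀ n, (Bn n).Nonempty)
    -- the operators L_n
    (L : ∀ n, F → Fn n)
    -- (a)
    (ha : ∀ f ∈ B, f ≠ 0 → ∃ fn : ∀ n, Fn n, (∀ n, fn n ∈ Bn n) ∧
        Filter.Tendsto (fun n => Nsn n (L n f - fn n)) Filter.atTop (nhds 0))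
    -- (b)
    (hb : ∀ h ∈ B, (⨅ g ∈ (G : Set F), (Ns (h - g) : ℝ≥0∞))
        ≤ Filter.liminf
            (fun n => ⨅ g ∈ (Gn n : Set (Fn n)), (Nsn n (L n h - g) : ℝ≥0∞))
            Filter.atTop) :
    (⨆ f ∈ B \ {0}, ⨅ g ∈ (G : Set F), (Ns (f - g) : ℝ≥0∞))
      ≤ Filter.liminf
          (fun n => ⨆ f ∈ Bn n, ⨅ g ∈ (Gn n : Set (Fn n)), (Nsn n (f - g) : ℝ≥0∞))
          Filter.atTop :=
  sup_best_approx_le_liminf_general β hβ0 F Ns G Fn Nsn hNtn Gn B Bn L ha hb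
end
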